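/- Under the GNN perturbation setting: let H^{(l+1)} = ReLU(Ã H^{(l)} W^{(l)}) and H'^{(l+1)} = ReLU(Ã' H'^{(l)} W^{(l)}) with H^{(0)} = H'^{(0)} = X, ‖Ã‖_F ≤ A, ‖Ã − Ã'‖_F ≤ A·B, ‖W^{(l)}‖₂ ≤ L_W, and ‖H'^{(l)}‖₂ ≤ (A L_W)^l ‖X‖₂. Then for every k ≥ 0, ‖H^{(k)} − H'^{(k)}‖_F ≤ k·(A·L_W)^k·B·‖X‖₂. -/

import Mathlib

noncomputable def frobNorm {m n : ℕ} (M : Matrix (Fin m) (Fin n) ℝ) : ℝ :=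
  Real.sqrt (∑ i, ∑ j, (M i j) ^ 2)

noncomputable def specNorm {m n : ℕ} (M : Matrix (Fin m) (Fin n) ℝ) : ℝ :=
  ‖LinearMap.toContinuousLinearMap (Matrix.toEuclideanLin M)‖

/-! Write the layer difference as `Ã (H - H') W + (Ã - Ã') H' W`. Since ReLU is 1-Lipschitz and
`‖P Q‖_F ≤ ‖P‖_F ‖Q‖₂` (row by row), the errors `c l = ‖H l - H' l‖_F` satisfy `c 0 = 0` and
`c (l + 1) ≤ a c l + a ^ (l + 1) b` with `a = A L_W` and `b = B ‖X‖₂`, using the assumed growth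
`‖H' l‖₂ ≤ a ^ l ‖X‖₂`; this recursion unrolls to `c l ≤ l a ^ l b`. -/

open Matrix WithLp

variable {m n p : ℕ}

section SpectralNorm

open scoped Matrix.Norms.L2Operator

lemma specNorm_nonneg (M : Matrix (Fin m) (Fin n) ℝ) : 0 ≤ specNorm M := norm_nonneg _

lemma specNorm_mul_le (M : Matrix (Fin m) (Fin n) ℝ) (N : Matrix (Fin n) (Fin p) ℝ) :
    specNorm (M * N) ≤ specNorm M * specNorm N :=
  l2_opNorm_mul M N

lemma norm_vecMul_le (v : Fin m → ℝ) (M : Matrix (Fin m) (Fin n) ℝ) :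
    ‖toLp 2 (v ᵥ* M)‖ ≤ ‖toLp 2 v‖ * specNorm M := by
  have h : ‖Mᵀ‖ = specNorm M := by
    rw [← conjTranspose_eq_transpose_of_trivial]; exact l2_opNorm_conjTranspose M
  rw [← mulVec_transpose, mul_comm, ← h]
  exact l2_opNorm_mulVec Mᵀ (toLp 2 v)

end SpectralNorm

section FrobeniusNorm

attribute [local instance] Matrix.frobeniusNormedAddCommGroup

lemma frobNorm_eq_norm (M : Matrix (Fin m) (Fin n) ℝ) : frobNorm M = ‖M‖ := by
  simp [frobNorm, frobenius_norm_def, Real.sqrt_eq_rpow]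

lemma frobNorm_sq_eq_sum (M : Matrix (Fin m) (Fin n) ℝ) :
    frobNorm M ^ 2 = ∑ i, ‖toLp 2 (M i)‖ ^ 2 := by
  rw [frobNorm, Real.sq_sqrt (by positivity)]
  simp [EuclideanSpace.norm_eq, Real.sq_sqrt, Finset.sum_nonneg, sq_nonneg]

lemma frobNorm_nonneg (M : Matrix (Fin m) (Fin n) ℝ) : 0 ≤ frobNorm M := Real.sqrt_nonneg _

lemma frobNorm_add_le (M N : Matrix (Fin m) (Fin n) ℝ) :
    frobNorm (M + N) ≤ frobNorm M + frobNorm N := by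
  simpa only [frobNorm_eq_norm] using norm_add_le M N

lemma frobNorm_mul_le (M : Matrix (Fin m) (Fin n) ℝ) (N : Matrix (Fin n) (Fin p) ℝ) :
    frobNorm (M * N) ≤ frobNorm M * frobNorm N := by
  simpa only [frobNorm_eq_norm] using frobenius_norm_mul M N

end FrobeniusNorm

lemma frobNorm_mul_le_frobNorm_mul_specNorm (M : Matrix (Fin m) (Fin n) ℝ)
    (N : Matrix (Fin n) (Fin p) ℝ) : frobNorm (M * N) ≤ frobNorm M * specNorm N := by
  have hsq : frobNorm (M * N) ^ 2 ≤ (frobNorm M * specNorm N) ^ 2 := by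
    rw [mul_pow, frobNorm_sq_eq_sum, frobNorm_sq_eq_sum, Finset.sum_mul]
    gcongr with i
    rw [← mul_pow, mul_apply_eq_vecMul]
    gcongr
    exact norm_vecMul_le (M i) N
  exact (pow_le_pow_iff_left₀ (frobNorm_nonneg _)
    (mul_nonneg (frobNorm_nonneg M) (specNorm_nonneg N)) two_ne_zero).mp hsq

lemma frobNorm_map_sub_map_le {f : ℝ → ℝ} (hf : LipschitzWith 1 f)
    (M N : Matrix (Fin m) (Fin n) ℝ) : frobNorm (M.map f - N.map f) ≤ frobNorm (M - N) := by
  refine Real.sqrt_le_sqrt <| Finset.sum_le_sum fun i _ => Finset.sum_le_sum fun j _ => ?_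
  have h := hf.dist_le_mul (M i j) (N i j)
  rw [NNReal.coe_one, one_mul, Real.dist_eq, Real.dist_eq] at h
  simpa only [Matrix.sub_apply, map_apply] using sq_le_sq.mpr h

lemma le_nat_mul_pow_mul_of_le_mul_add_pow {c : ℕ → ℝ} {a b : ℝ} (ha : 0 ≤ a) (h0 : c 0 ≤ 0)
    (hstep : ∀ l, c (l + 1) ≤ a * c l + a ^ (l + 1) * b) (k : ℕ) : c k ≤ k * a ^ k * b := by
  induction k with
  | zero => simpa using h0
  | succ l ih =>
    calc c (l + 1) ≤ a * c l + a ^ (l + 1) * b := hstep l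
      _ ≤ a * (l * a ^ l * b) + a ^ (l + 1) * b := by gcongr
      _ = (l + 1 : ℕ) * a ^ (l + 1) * b := by push_cast; ring

lemma frobNorm_layer_sub_le {q : ℕ} {f : ℝ → ℝ} (hf : LipschitzWith 1 f)
    {P P' : Matrix (Fin m) (Fin n) ℝ} {H H' : Matrix (Fin n) (Fin p) ℝ}
    {W : Matrix (Fin p) (Fin q) ℝ} {a δ h w : ℝ} (hP : frobNorm P ≤ a)
    (hPP' : frobNorm (P - P') ≤ δ) (hH' : specNorm H' ≤ h) (hW : specNorm W ≤ w) :
    frobNorm ((P * H * W).map f - (P' * H' * W).map f) ≤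
      a * w * frobNorm (H - H') + δ * (h * w) := by
  have hsplit : P * H * W - P' * H' * W = P * (H - H') * W + (P - P') * (H' * W) := by
    simp only [Matrix.mul_sub, Matrix.sub_mul, Matrix.mul_assoc]
    abel
  have ha : 0 ≤ a := (frobNorm_nonneg P).trans hP
  have hδ : 0 ≤ δ := (frobNorm_nonneg _).trans hPP'
  have hh : 0 ≤ h := (specNorm_nonneg H').trans hH'
  have hdiff : 0 ≤ frobNorm (H - H') := frobNorm_nonneg _
  have hPP'0 : 0 ≤ frobNorm (P - P') := frobNorm_nonneg _
  have hW0 : 0 ≤ specNorm W := specNorm_nonneg W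
  have hH'0 : 0 ≤ specNorm H' := specNorm_nonneg H'
  calc frobNorm ((P * H * W).map f - (P' * H' * W).map f)
      ≤ frobNorm (P * H * W - P' * H' * W) := frobNorm_map_sub_map_le hf _ _
    _ ≤ frobNorm (P * (H - H') * W) + frobNorm ((P - P') * (H' * W)) :=
      hsplit ▸ frobNorm_add_le _ _
    _ ≤ frobNorm (P * (H - H')) * specNorm W + frobNorm (P - P') * specNorm (H' * W) :=
      add_le_add (frobNorm_mul_le_frobNorm_mul_specNorm _ _)
        (frobNorm_mul_le_frobNorm_mul_specNorm _ _)
    _ ≤ frobNorm P * frobNorm (H - H') * specNorm W +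
        frobNorm (P - P') * (specNorm H' * specNorm W) := by
      gcongr
      · exact frobNorm_mul_le _ _
      · exact specNorm_mul_le _ _
    _ ≤ a * frobNorm (H - H') * w + δ * (h * w) := by
      gcongr
    _ = a * w * frobNorm (H - H') + δ * (h * w) := by ring

/-- GNN output difference bound (Lemma 4). -/
theorem gnn_output_difference_bound {n d : ℕ}
    (Atil Atil' : Matrix (Fin n) (Fin n) ℝ)
    (W : ℕ → Matrix (Fin d) (Fin d) ℝ)
    (X : Matrix (Fin n) (Fin d) ℝ)
    (H H' : ℕ → Matrix (Fin n) (Fin d) ℝ)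
    (A B LW : ℝ)
    (hH0 : H 0 = X) (hH'0 : H' 0 = X)
    (hrecH : ∀ l, H (l + 1) = (Atil * H l * W l).map (fun x => max x 0))
    (hrecH' : ∀ l, H' (l + 1) = (Atil' * H' l * W l).map (fun x => max x 0))
    (hA : frobNorm Atil ≤ A)
    (hAdiff : frobNorm (Atil - Atil') ≤ A * B)
    (hW : ∀ l, specNorm (W l) ≤ LW)
    (hH' : ∀ l, specNorm (H' l) ≤ (A * LW) ^ l * specNorm X) :
    ∀ k, frobNorm (H k - H' k) ≤ k * (A * LW) ^ k * B * specNorm X := by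
  have hrelu : LipschitzWith 1 fun x : ℝ => max x 0 := LipschitzWith.id.max_const 0
  have hALW : 0 ≤ A * LW :=
    mul_nonneg ((frobNorm_nonneg _).trans hA) ((specNorm_nonneg _).trans (hW 0))
  have hstep : ∀ l, frobNorm (H (l + 1) - H' (l + 1)) ≤
      A * LW * frobNorm (H l - H' l) + (A * LW) ^ (l + 1) * (B * specNorm X) := fun l => by
    rw [hrecH, hrecH']
    refine (frobNorm_layer_sub_le hrelu hA hAdiff (hH' l) (hW l)).trans_eq ?_
    ring
  have h0 : frobNorm (H 0 - H' 0) ≤ 0 := by simp [hH0, hH'0, frobNorm]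
  intro k
  simpa only [mul_assoc] using
    le_nat_mul_pow_mul_of_le_mul_add_pow (c := fun k => frobNorm (H k - H' k)) hALW h0 hstep k
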